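/- arXiv:2310.02290 — 10 statements merged into one kernel-verified Lean document; each statement's English description precedes it below -/
import Mathlib

section
/- Let n, m be positive natural numbers and let 𝓔 : Matrix (Fin n) (Fin n) ℂ →ₗ[ℂ] Matrix (Fin m) (Fin m) ℂ be a linear map that is completely positive, in the sense that for every k ∈ ℕ and every positive semidefinite X ∈ Matrix (Fin k × Fin n) (Fin k × Fin n) ℂ, the matrix with entries ((i,p),(j,q)) ↦ (𝓔(X block (i,j)))_{p,q} is positive semidefinite, where X block (i,j) ∈ Matrix (Fin n) (Fin n) ℂ has entries (a,b) ↦ X_{(i,a),(j,b)}. Then there exists a family of matrices E_1, …, E_{n·m} ∈ Matrix (Fin m) (Fin n) ℂ such that 𝓔(A) = ∑_i E_i A E_i† for all A ∈ Matrix (Fin n) (Fin n) ℂ. If moreover trace(𝓔(ρ)) ≤ trace(ρ) for every positive semidefinite ρ, then this family satisfies: 1_n − ∑_i E_i† E_i is positive semidefinite. -/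
/-!
The Choi matrix `C_{(a,p),(b,q)} = 𝓔(e_{ab})_{pq}` is what the blockwise application of `𝓔`
makes of the unnormalised maximally entangled projector `vec 1 (vec 1)ᴴ`, whose `(i,j)` block is
the matrix unit `e_{ij}`; complete positivity therefore makes `C` positive semidefinite, say
`C = Bᴴ B`. A linear map is determined by its Choi matrix, and the Kraus map whose operators are
the rows of `B`, reshaped and conjugated, has Choi matrix `Bᴴ B`: this is the decomposition.
For the trace condition, `tr 𝓔(ρ) = tr (ρ ∑ Eᵢᴴ Eᵢ)`, and tested on `ρ = x xᴴ` this says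
`xᴴ (1 - ∑ Eᵢᴴ Eᵢ) x ≥ 0`.
-/

open Matrix ComplexOrder

section Kraus

variable {R n m ι κ : Type*}

def choiMatrix [Semiring R] [DecidableEq n] (Φ : Matrix n n R →ₗ[R] Matrix m m R) :
    Matrix (n × m) (n × m) R :=
  of fun ip jq => Φ (Matrix.single ip.1 jq.1 1) ip.2 jq.2

theorem vecMulVec_vec_one_block_eq_single [Semiring R] [StarRing R] [DecidableEq n] (i j : n) :
    (of fun a b => vecMulVec (vec (1 : Matrix n n R)) (star (vec 1)) (i, a) (j, b)) =
      Matrix.single i j 1 := by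
  ext a b
  by_cases hia : i = a <;> by_cases hjb : j = b <;>
    simp [vecMulVec_apply, one_apply, Matrix.single, hia, hjb, eq_comm]

theorem choiMatrix_injective [Semiring R] [Finite n] [DecidableEq n] :
    Function.Injective (choiMatrix : (Matrix n n R →ₗ[R] Matrix m m R) → _) := by
  intro Φ Ψ h
  refine Matrix.ext_linearMap _ fun a b => LinearMap.ext_ring ?_
  ext p q
  exact congrFun (congrFun h (a, p)) (b, q)

def krausMap [CommSemiring R] [StarRing R] [Fintype ι] [Fintype n] (K : ι → Matrix m n R) :
    Matrix n n R →ₗ[R] Matrix m m R where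
  toFun A := ∑ i, K i * A * (K i)ᴴ
  map_add' A B := by simp only [Matrix.mul_add, Matrix.add_mul, Finset.sum_add_distrib]
  map_smul' c A := by
    simp only [Matrix.mul_smul, Matrix.smul_mul, Finset.smul_sum, RingHom.id_apply]

section CommSemiring

variable [CommSemiring R] [StarRing R] [Fintype ι] [Fintype n]

theorem krausMap_apply (K : ι → Matrix m n R) (A : Matrix n n R) :
    krausMap K A = ∑ i, K i * A * (K i)ᴴ :=
  rfl

theorem krausMap_comp_equiv [Fintype κ] (K : ι → Matrix m n R) (e : κ ≃ ι) :
    krausMap (K ∘ e) = krausMap K :=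
  LinearMap.ext fun A => Equiv.sum_comp e fun i => K i * A * (K i)ᴴ

theorem choiMatrix_krausMap [DecidableEq n] (K : ι → Matrix m n R) :
    choiMatrix (krausMap K) = of fun ip jq => ∑ i, K i ip.2 ip.1 * star (K i jq.2 jq.1) := by
  ext ⟨a, p⟩ ⟨b, q⟩
  simp [choiMatrix, krausMap_apply, Matrix.sum_apply, mul_apply, Matrix.single, ite_and, ite_mul]

def krausOfChoiFactor (B : Matrix ι (n × m) R) (i : ι) : Matrix m n R :=
  of fun p a => star (B i (a, p))

theorem choiMatrix_krausMap_krausOfChoiFactor [DecidableEq n] (B : Matrix ι (n × m) R) :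
    choiMatrix (krausMap (krausOfChoiFactor B)) = Bᴴ * B := by
  ext ⟨a, p⟩ ⟨b, q⟩
  simp only [choiMatrix_krausMap, krausOfChoiFactor, of_apply, star_star, mul_apply,
    conjTranspose_apply]

theorem krausMap_krausOfChoiFactor_of_choiMatrix_eq [DecidableEq n]
    {Φ : Matrix n n R →ₗ[R] Matrix m m R} {B : Matrix ι (n × m) R}
    (hB : choiMatrix Φ = Bᴴ * B) : krausMap (krausOfChoiFactor B) = Φ :=
  choiMatrix_injective (by rw [hB, choiMatrix_krausMap_krausOfChoiFactor])

theorem trace_krausMap [Fintype m] (K : ι → Matrix m n R) (A : Matrix n n R) :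
    trace (krausMap K A) = trace (A * ∑ i, (K i)ᴴ * K i) := by
  simp only [krausMap_apply, trace_sum, Finset.mul_sum]
  refine Finset.sum_congr rfl fun i _ => ?_
  rw [trace_mul_cycle, ← Matrix.mul_assoc, trace_mul_comm, ← Matrix.mul_assoc]

theorem trace_vecMulVec_star_mul (x : n → R) (M : Matrix n n R) :
    trace (vecMulVec x (star x) * M) = star x ⬝ᵥ M *ᵥ x := by
  rw [trace_mul_comm, mul_vecMulVec, trace_vecMulVec, dotProduct_comm]

end CommSemiring

section StarOrderedRing

variable [CommRing R] [PartialOrder R] [StarRing R] [StarOrderedRing R] [Fintype n]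

theorem posSemidef_of_forall_trace_mul_nonneg {M : Matrix n n R} (hM : M.IsHermitian)
    (h : ∀ ρ : Matrix n n R, ρ.PosSemidef → 0 ≤ trace (ρ * M)) : M.PosSemidef :=
  posSemidef_iff_dotProduct_mulVec.mpr ⟨hM, fun x => by
    simpa only [trace_vecMulVec_star_mul] using h _ (posSemidef_vecMulVec_self_star x)⟩

theorem posSemidef_one_sub_sum_conjTranspose_mul_self [Fintype m] [Fintype ι] [DecidableEq n]
    (K : ι → Matrix m n R)
    (h : ∀ ρ : Matrix n n R, ρ.PosSemidef → trace (krausMap K ρ) ≤ trace ρ) :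
    (1 - ∑ i, (K i)ᴴ * K i).PosSemidef := by
  refine posSemidef_of_forall_trace_mul_nonneg
    (isHermitian_one.sub (posSemidef_sum _ fun i _ => posSemidef_conjTranspose_mul_self _).1)
    fun ρ hρ => ?_
  rw [Matrix.mul_sub, Matrix.mul_one, trace_sub, sub_nonneg, ← trace_krausMap]
  exact h ρ hρ

end StarOrderedRing

end Kraus

theorem choi_kraus_general
    (n m : ℕ)
    (𝓔 : Matrix (Fin n) (Fin n) ℂ →ₗ[ℂ] Matrix (Fin m) (Fin m) ℂ)
    (hCP : ∀ (k : ℕ) (X : Matrix (Fin k × Fin n) (Fin k × Fin n) ℂ), X.PosSemidef →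
        (Matrix.of (fun ip jq : Fin k × Fin m =>
          (𝓔 (Matrix.of fun a b => X (ip.1, a) (jq.1, b))) ip.2 jq.2)).PosSemidef) :
    ∃ E : Fin (n * m) → Matrix (Fin m) (Fin n) ℂ,
      (∀ A, 𝓔 A = ∑ i, E i * A * (E i)ᴴ) ∧
      ((∀ ρ : Matrix (Fin n) (Fin n) ℂ, ρ.PosSemidef → (𝓔 ρ).trace ≤ ρ.trace) →
        ((1 : Matrix (Fin n) (Fin n) ℂ) - ∑ i, (E i)ᴴ * E i).PosSemidef) := by
  have hChoi : (choiMatrix 𝓔).PosSemidef := by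
    simpa only [choiMatrix, vecMulVec_vec_one_block_eq_single] using
      hCP n _ (posSemidef_vecMulVec_self_star (vec 1))
  obtain ⟨B, hB⟩ : ∃ B, choiMatrix 𝓔 = star B * B := by
    open scoped MatrixOrder in
    exact CStarAlgebra.nonneg_iff_eq_star_mul_self.mp hChoi.nonneg
  set E := krausOfChoiFactor B ∘ finProdFinEquiv.symm
  have hE : krausMap E = 𝓔 := by
    rw [krausMap_comp_equiv, krausMap_krausOfChoiFactor_of_choiMatrix_eq hB]
  exact ⟨E, fun A => by rw [← hE, krausMap_apply],
    fun hTP => posSemidef_one_sub_sum_conjTranspose_mul_self E (hE ▸ hTP)⟩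

/-- Choi–Kraus theorem: every completely positive linear map
`𝓔 : Matrix (Fin n) (Fin n) ℂ → Matrix (Fin m) (Fin m) ℂ` admits a Kraus
decomposition with `n·m` Kraus operators, and if `𝓔` is moreover
trace-nonincreasing on states then the Kraus family satisfies
`∑ i, E iᴴ * E i ≤ 1`. -/
theorem choi_kraus
    (n m : ℕ) (hn : 0 < n) (hm : 0 < m)
    (𝓔 : Matrix (Fin n) (Fin n) ℂ →ₗ[ℂ] Matrix (Fin m) (Fin m) ℂ)
    (hCP : ∀ (k : ℕ) (X : Matrix (Fin k × Fin n) (Fin k × Fin n) ℂ), X.PosSemidef →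
        (Matrix.of (fun ip jq : Fin k × Fin m =>
          (𝓔 (Matrix.of fun a b => X (ip.1, a) (jq.1, b))) ip.2 jq.2)).PosSemidef) :
    ∃ E : Fin (n * m) → Matrix (Fin m) (Fin n) ℂ,
      (∀ A, 𝓔 A = ∑ i, E i * A * (E i)ᴴ) ∧
      ((∀ ρ : Matrix (Fin n) (Fin n) ℂ, ρ.PosSemidef → (𝓔 ρ).trace ≤ ρ.trace) →
        ((1 : Matrix (Fin n) (Fin n) ℂ) - ∑ i, (E i)ᴴ * E i).PosSemidef) :=
  choi_kraus_general n m 𝓔 hCP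
end

section
/- Let n, m be positive natural numbers. The assignment sending a linear map 𝓔 : Matrix (Fin n) (Fin n) ℂ →ₗ[ℂ] Matrix (Fin m) (Fin m) ℂ to its Choi matrix σ_𝓔 := ∑_{i,j} E_{ij} ⊗ 𝓔(E_{ij}) ∈ Matrix (Fin n × Fin m) (Fin n × Fin m) ℂ is a ℂ-linear equivalence between the space of linear maps from Matrix (Fin n) (Fin n) ℂ to Matrix (Fin m) (Fin m) ℂ and Matrix (Fin n × Fin m) (Fin n × Fin m) ℂ. -/
open Matrix Kronecker

/-!
The Choi matrix of `𝓔` is the block matrix whose `(i, j)` block is `𝓔 E_{ij}`. A linear map out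
of `Matrix ι ι R` is determined freely by its values on the standard basis `E_{ij}`, and an
`ι × ι`-indexed family of `κ × κ` blocks is the same thing as one `(ι × κ) × (ι × κ)` matrix;
composing these two isomorphisms gives the Choi map.
-/

namespace Matrix

variable {R ι κ : Type*}

theorem sum_single_one_kronecker_apply [Fintype ι] [DecidableEq ι] [NonAssocSemiring R]
    (F : ι → ι → Matrix κ κ R) (i j : ι) (k l : κ) :
    (∑ a, ∑ b, single a b (1 : R) ⊗ₖ F a b) (i, k) (j, l) = F i j k l := by
  simp [Matrix.sum_apply, single_apply, ite_and]

variable (R ι κ)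

@[simps]
def blockMatrixEquiv [Semiring R] : (ι × ι → Matrix κ κ R) ≃ₗ[R] Matrix (ι × κ) (ι × κ) R where
  toFun F := of fun ik jl => F (ik.1, jl.1) ik.2 jl.2
  invFun M ij := of fun k l => M (ij.1, k) (ij.2, l)
  map_add' _ _ := rfl
  map_smul' _ _ := rfl
  left_inv _ := rfl
  right_inv _ := rfl

variable [Fintype ι] [DecidableEq ι] [CommSemiring R]

noncomputable def choiEquiv :
    (Matrix ι ι R →ₗ[R] Matrix κ κ R) ≃ₗ[R] Matrix (ι × κ) (ι × κ) R :=
  ((stdBasis R ι ι).constr R).symm ≪≫ₗ blockMatrixEquiv R ι κ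

variable {R ι κ}

theorem choiEquiv_apply (𝓔 : Matrix ι ι R →ₗ[R] Matrix κ κ R) :
    choiEquiv R ι κ 𝓔 = ∑ i, ∑ j, single i j (1 : R) ⊗ₖ 𝓔 (single i j 1) := by
  ext ⟨i, k⟩ ⟨j, l⟩
  simp [choiEquiv, sum_single_one_kronecker_apply, stdBasis_eq_single]

end Matrix

theorem choi_jamiolkowski_equiv_general (n m : ℕ) :
    ∃ L : (Matrix (Fin n) (Fin n) ℂ →ₗ[ℂ] Matrix (Fin m) (Fin m) ℂ) ≃ₗ[ℂ]
          Matrix (Fin n × Fin m) (Fin n × Fin m) ℂ,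
      ∀ 𝓔 : Matrix (Fin n) (Fin n) ℂ →ₗ[ℂ] Matrix (Fin m) (Fin m) ℂ,
        L 𝓔 = ∑ i : Fin n, ∑ j : Fin n,
          (Matrix.single i j (1 : ℂ)) ⊗ₖ 𝓔 (Matrix.single i j (1 : ℂ)) :=
  ⟨choiEquiv ℂ (Fin n) (Fin m), choiEquiv_apply⟩

/-- Choi–Jamiolkowski isomorphism: the map sending a linear map
`𝓔 : Matrix (Fin n) (Fin n) ℂ →ₗ[ℂ] Matrix (Fin m) (Fin m) ℂ` to its Choi matrix
`∑ i j, E_{ij} ⊗ 𝓔(E_{ij})` is a ℂ-linear equivalence onto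
`Matrix (Fin n × Fin m) (Fin n × Fin m) ℂ`. -/
theorem choi_jamiolkowski_equiv (n m : ℕ) (hn : 0 < n) (hm : 0 < m) :
    ∃ L : (Matrix (Fin n) (Fin n) ℂ →ₗ[ℂ] Matrix (Fin m) (Fin m) ℂ) ≃ₗ[ℂ]
          Matrix (Fin n × Fin m) (Fin n × Fin m) ℂ,
      ∀ 𝓔 : Matrix (Fin n) (Fin n) ℂ →ₗ[ℂ] Matrix (Fin m) (Fin m) ℂ,
        L 𝓔 = ∑ i : Fin n, ∑ j : Fin n,
          (Matrix.single i j (1 : ℂ)) ⊗ₖ 𝓔 (Matrix.single i j (1 : ℂ)) :=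
  choi_jamiolkowski_equiv_general n m
end

section
/- Let n, d be positive natural numbers and let E_1, …, E_d ∈ Matrix (Fin n) (Fin n) ℂ satisfy ∑_{i=1}^d E_i† E_i = 1_n. Then there exists a unitary matrix U ∈ Matrix (Fin n × Fin d) (Fin n × Fin d) ℂ such that for every ρ ∈ Matrix (Fin n) (Fin n) ℂ, ∑_{i=1}^d E_i ρ E_i† = Tr₂[U (ρ ⊗ e₀e₀†) U†], where e₀e₀† ∈ Matrix (Fin d) (Fin d) ℂ is the standard matrix unit E_{00} (the projector onto the first basis vector of ℂ^d), ⊗ is the Kronecker product, and Tr₂ is the partial trace over the second Kronecker factor: (Tr₂ X)_{p,q} = ∑_{k} X_{(p,k),(q,k)}. -/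
open Matrix Kronecker

/-! Stacking the Kraus operators gives an isometry `V : ℂⁿ → ℂⁿ ⊗ ℂᵈ`, `V x = ∑ᵢ Eᵢ x ⊗ eᵢ`,
because `Vᴴ V = ∑ᵢ Eᵢᴴ Eᵢ = 1`. Its columns are orthonormal, so they extend to an orthonormal
basis; placing them in the columns `(q, 0)` yields a unitary `U` with `U (x ⊗ e₀) = V x`. Then
`U (ρ ⊗ e₀e₀ᴴ) Uᴴ = V ρ Vᴴ`, whose partial trace over the environment is `∑ᵢ Eᵢ ρ Eᵢᴴ`. -/

namespace Matrix

section UnitaryExtension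

variable {𝕜 : Type*} [RCLike 𝕜] {m n : Type*} [Fintype m] [DecidableEq n]

theorem orthonormal_cols_of_conjTranspose_mul_self {V : Matrix m n 𝕜} (hV : Vᴴ * V = 1) :
    Orthonormal 𝕜 fun j => WithLp.toLp 2 (fun i => V i j) := by
  rw [← gram_eq_one_iff_orthonormal, gram_eq_conjTranspose_mul (EuclideanSpace.basisFun m 𝕜)]
  exact hV

theorem exists_mem_unitaryGroup_submatrix_eq [DecidableEq m] {V : Matrix m n 𝕜}
    (hV : Vᴴ * V = 1) {f : n → m} (hf : f.Injective) :
    ∃ U ∈ unitaryGroup m 𝕜, U.submatrix id f = V := by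
  set col : n → EuclideanSpace 𝕜 m := fun j => WithLp.toLp 2 (fun i => V i j)
  set v := Function.extend f col 0
  have hv : Orthonormal 𝕜 ((Set.range f).domRestrict v) := by
    have : (Set.range f).domRestrict v = col ∘ (Equiv.ofInjective f hf).symm := by
      ext ⟨_, j, rfl⟩ : 1
      simp [v, hf.extend_apply]
    rw [this]
    exact (orthonormal_cols_of_conjTranspose_mul_self hV).comp _ (Equiv.injective _)
  obtain ⟨b, hb⟩ := hv.exists_orthonormalBasis_extension_of_card_eq finrank_euclideanSpace
  refine ⟨(EuclideanSpace.basisFun m 𝕜).toBasis.toMatrix b,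
    (EuclideanSpace.basisFun m 𝕜).toMatrix_orthonormalBasis_mem_unitary b, ?_⟩
  ext i j
  simp [Module.Basis.toMatrix_apply, hb (f j) ⟨j, rfl⟩, v, hf.extend_apply, col]

end UnitaryExtension

section PartialTrace

variable {R : Type*} {n ι : Type*} [Fintype n] [Fintype ι]

def partialTraceRight [AddCommMonoid R] (X : Matrix (n × ι) (n × ι) R) : Matrix n n R :=
  of fun p q => ∑ k, X (p, k) (q, k)

theorem mul_kronecker_single_mul_conjTranspose [CommSemiring R] [Star R] [DecidableEq ι]
    {l : Type*} (U : Matrix l (n × ι) R) (ρ : Matrix n n R) (z : ι) :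
    U * (ρ ⊗ₖ single z z 1) * Uᴴ
      = U.submatrix id (·, z) * ρ * (U.submatrix id (·, z))ᴴ := by
  ext x y
  simp [mul_apply, Fintype.sum_prod_type, single_apply, ite_and, Finset.sum_ite_irrel,
    ite_mul]

end PartialTrace

end Matrix

section Kraus

variable {R : Type*} {n ι : Type*} [Fintype n] [Fintype ι]

def krausIsometry (E : ι → Matrix n n R) : Matrix (n × ι) n R :=
  of fun x q => E x.2 x.1 q

theorem conjTranspose_krausIsometry_mul_self [NonUnitalSemiring R] [Star R]
    (E : ι → Matrix n n R) :
    (krausIsometry E)ᴴ * krausIsometry E = ∑ i, (E i)ᴴ * E i := by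
  ext p q
  simp only [mul_apply, conjTranspose_apply, krausIsometry, of_apply, Matrix.sum_apply,
    Fintype.sum_prod_type]
  exact Finset.sum_comm

theorem partialTraceRight_krausIsometry_conj [NonUnitalSemiring R] [Star R]
    (E : ι → Matrix n n R) (ρ : Matrix n n R) :
    partialTraceRight (krausIsometry E * ρ * (krausIsometry E)ᴴ) = ∑ i, E i * ρ * (E i)ᴴ := by
  ext p q
  simp [partialTraceRight, krausIsometry, mul_apply, Matrix.sum_apply]

end Kraus

theorem stinespring_dilation_general (n d : ℕ) (hd : 0 < d)
    (E : Fin d → Matrix (Fin n) (Fin n) ℂ)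
    (hE : ∑ i, (E i)ᴴ * E i = 1) :
    ∃ U : Matrix (Fin n × Fin d) (Fin n × Fin d) ℂ,
      U * Uᴴ = 1 ∧ Uᴴ * U = 1 ∧
      ∀ ρ : Matrix (Fin n) (Fin n) ℂ,
        (∑ i, E i * ρ * (E i)ᴴ)
          = Matrix.of (fun p q : Fin n => ∑ k : Fin d,
              (U * (ρ ⊗ₖ Matrix.single (⟨0, hd⟩ : Fin d) (⟨0, hd⟩ : Fin d) (1 : ℂ)) * Uᴴ)
                (p, k) (q, k)) := by
  have hV : (krausIsometry E)ᴴ * krausIsometry E = 1 := by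
    rw [conjTranspose_krausIsometry_mul_self, hE]
  obtain ⟨U, hU, hUV⟩ := exists_mem_unitaryGroup_submatrix_eq hV
    (Prod.mk_left_injective (⟨0, hd⟩ : Fin d))
  refine ⟨U, mem_unitaryGroup_iff.mp hU, mem_unitaryGroup_iff'.mp hU, fun ρ => ?_⟩
  change _ = partialTraceRight _
  rw [mul_kronecker_single_mul_conjTranspose, hUV, partialTraceRight_krausIsometry_conj]

/-- Stinespring dilation for trace-preserving operations: a quantum channel given
by Kraus operators `E i` with `∑ i, E iᴴ * E i = 1` can be realized as
`ρ ↦ Tr₂[U (ρ ⊗ |0⟩⟨0|) Uᴴ]` for some unitary `U` on the system-plus-environment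
space. -/
theorem stinespring_dilation (n d : ℕ) (hn : 0 < n) (hd : 0 < d)
    (E : Fin d → Matrix (Fin n) (Fin n) ℂ)
    (hE : ∑ i, (E i)ᴴ * E i = 1) :
    ∃ U : Matrix (Fin n × Fin d) (Fin n × Fin d) ℂ,
      U * Uᴴ = 1 ∧ Uᴴ * U = 1 ∧
      ∀ ρ : Matrix (Fin n) (Fin n) ℂ,
        (∑ i, E i * ρ * (E i)ᴴ)
          = Matrix.of (fun p q : Fin n => ∑ k : Fin d,
              (U * (ρ ⊗ₖ Matrix.single (⟨0, hd⟩ : Fin d) (⟨0, hd⟩ : Fin d) (1 : ℂ)) * Uᴴ)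
                (p, k) (q, k)) :=
  stinespring_dilation_general n d hd E hE
end

section
/- Let n, e be positive natural numbers, let U ∈ Matrix (Fin n × Fin e) (Fin n × Fin e) ℂ be unitary, let P ∈ Matrix (Fin n × Fin e) (Fin n × Fin e) ℂ be Hermitian, and let σ ∈ Matrix (Fin e) (Fin e) ℂ be the diagonal matrix with nonnegative real diagonal entries s_ℓ. For k, ℓ ∈ Fin e define E_{kℓ} ∈ Matrix (Fin n) (Fin n) ℂ by (E_{kℓ})_{p,q} := √(s_ℓ) · (P·U)_{(p,k),(q,ℓ)}. Then for every ρ ∈ Matrix (Fin n) (Fin n) ℂ, Tr₂[P U (ρ ⊗ σ) U† P] = ∑_{k,ℓ} E_{kℓ} ρ E_{kℓ}†, where ⊗ is the Kronecker product and Tr₂ is the partial trace over the second Kronecker factor: (Tr₂ X)_{p,q} = ∑_{k} X_{(p,k),(q,k)}. -/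
open Matrix Kronecker

/-- A system-plus-environment model `ρ ↦ Tr₂[P U (ρ ⊗ σ) Uᴴ P]`, with `U` unitary,
`P` Hermitian and `σ` a diagonal environment state with nonnegative entries `s ℓ`,
has the explicit Kraus decomposition with Kraus operators
`(E_{kℓ})_{p,q} = √(s ℓ) · (P·U)_{(p,k),(q,ℓ)}`. -/
theorem sys_env_kraus (n e : ℕ) (hn : 0 < n) (he : 0 < e)
    (U P : Matrix (Fin n × Fin e) (Fin n × Fin e) ℂ)
    (hU : U * Uᴴ = 1) (hU' : Uᴴ * U = 1)
    (hP : P.IsHermitian)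
    (s : Fin e → ℝ) (hs : ∀ ℓ, 0 ≤ s ℓ)
    (ρ : Matrix (Fin n) (Fin n) ℂ) :
    Matrix.of (fun p q : Fin n => ∑ k : Fin e,
        (P * U * (ρ ⊗ₖ Matrix.diagonal (fun ℓ => (s ℓ : ℂ))) * Uᴴ * P) (p, k) (q, k))
      = ∑ k : Fin e, ∑ ℓ : Fin e,
          (Matrix.of fun p q : Fin n => (Real.sqrt (s ℓ) : ℂ) * (P * U) (p, k) (q, ℓ)) * ρ *
          (Matrix.of fun p q : Fin n => (Real.sqrt (s ℓ) : ℂ) * (P * U) (p, k) (q, ℓ))ᴴ := by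
  have key : P * U * (ρ ⊗ₖ Matrix.diagonal (fun ℓ => (s ℓ : ℂ))) * Uᴴ * P
      = (P * U) * (ρ ⊗ₖ Matrix.diagonal (fun ℓ => (s ℓ : ℂ))) * (P * U)ᴴ := by
    rw [Matrix.conjTranspose_mul, hP.eq, Matrix.mul_assoc (P * U * _)]
  rw [key]
  set A := P * U with hAdef
  ext p q
  simp only [Matrix.of_apply, Matrix.sum_apply, Matrix.mul_apply,
    Matrix.conjTranspose_apply, Matrix.kroneckerMap_apply, Matrix.diagonal_apply,
    Fintype.sum_prod_type, mul_ite, ite_mul, mul_zero, zero_mul,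
    Finset.sum_ite_eq', Finset.mem_univ, if_true, star_mul', Complex.star_def,
    Complex.conj_ofReal, Finset.mul_sum, Finset.sum_mul]
  refine Finset.sum_congr rfl fun k _ => ?_
  rw [Finset.sum_comm]
  refine Finset.sum_congr rfl fun ℓ _ => Finset.sum_congr rfl fun b1 _ =>
    Finset.sum_congr rfl fun a1 _ => ?_
  have h2 : ((Real.sqrt (s ℓ) : ℂ)) * (Real.sqrt (s ℓ) : ℂ) = ((s ℓ : ℝ) : ℂ) := by
    norm_cast
    exact Real.mul_self_sqrt (hs ℓ)
  rw [← h2]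
  ring
end

section
/- Let P, P₁, P₂ : Fin 2 → Fin 2 → Fin 2 → Fin 2 → Fin 2 → ℝ be families of conditional probability distributions, i.e. P₁ x y a b b' ≥ 0 and ∑_{x,y} P₁ x y a b b' = 1 for all a, b, b' (and likewise for P₂ and P). Suppose P₁ satisfies 'A cannot signal to B': ∑_x P₁ x y a b b' does not depend on a; suppose P₂ satisfies 'B cannot signal to A': ∑_y P₂ x y a b b' does not depend on b and does not depend on b'; and suppose P is causally separable: there is q ∈ ℝ with 0 ≤ q ≤ 1 and P = q•P₁ + (1−q)•P₂ (pointwise). Define the probability of success of the guessing game as P_succ := (1/2)·[ (1/4)·∑_{a,b} ∑_y P b y a b 0 + (1/4)·∑_{a,b} ∑_x P x a a b 1 ]. Then P_succ ≤ 3/4. -/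
/-- The causal inequality: if a bipartite conditional probability distribution
`P(x,y | a,b,b')` is a convex mixture of a distribution in which A cannot signal
to B and one in which B cannot signal to A, then the success probability of the
causal guessing game is at most `3/4`. -/
theorem causal_inequality
    (P P₁ P₂ : Fin 2 → Fin 2 → Fin 2 → Fin 2 → Fin 2 → ℝ)
    (hP₁pos : ∀ x y a b b', 0 ≤ P₁ x y a b b')
    (hP₁norm : ∀ a b b', ∑ x : Fin 2, ∑ y : Fin 2, P₁ x y a b b' = 1)
    (hP₂pos : ∀ x y a b b', 0 ≤ P₂ x y a b b')
    (hP₂norm : ∀ a b b', ∑ x : Fin 2, ∑ y : Fin 2, P₂ x y a b b' = 1)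
    (hPpos : ∀ x y a b b', 0 ≤ P x y a b b')
    (hPnorm : ∀ a b b', ∑ x : Fin 2, ∑ y : Fin 2, P x y a b b' = 1)
    -- A cannot signal to B: Bob's marginal does not depend on Alice's input a
    (hNS₁ : ∀ y a a' b b', ∑ x : Fin 2, P₁ x y a b b' = ∑ x : Fin 2, P₁ x y a' b b')
    -- B cannot signal to A: Alice's marginal does not depend on Bob's inputs b, b'
    (hNS₂ : ∀ x a b b' c c', ∑ y : Fin 2, P₂ x y a b b' = ∑ y : Fin 2, P₂ x y a c c')
    (q : ℝ) (hq0 : 0 ≤ q) (hq1 : q ≤ 1)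
    (hmix : ∀ x y a b b', P x y a b b' = q * P₁ x y a b b' + (1 - q) * P₂ x y a b b') :
    (1/2 : ℝ) * ((1/4) * (∑ a : Fin 2, ∑ b : Fin 2, ∑ y : Fin 2, P b y a b 0)
               + (1/4) * (∑ a : Fin 2, ∑ b : Fin 2, ∑ x : Fin 2, P x a a b 1)) ≤ 3/4 := by
  -- bound the single-term sums by the full normalized sums
  have t1 : ∀ a b : Fin 2, ∑ y : Fin 2, P₁ b y a b 0 ≤ 1 := by
    intro a b
    calc ∑ y : Fin 2, P₁ b y a b 0
        ≤ ∑ x : Fin 2, ∑ y : Fin 2, P₁ x y a b 0 :=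
          Finset.single_le_sum (f := fun x => ∑ y : Fin 2, P₁ x y a b 0)
            (fun i _ => Finset.sum_nonneg fun j _ => hP₁pos i j a b 0)
            (Finset.mem_univ b)
      _ = 1 := hP₁norm a b 0
  have t2 : ∀ a b : Fin 2, ∑ x : Fin 2, P₂ x a a b 1 ≤ 1 := by
    intro a b
    calc ∑ x : Fin 2, P₂ x a a b 1
        ≤ ∑ y : Fin 2, ∑ x : Fin 2, P₂ x y a b 1 :=
          Finset.single_le_sum (f := fun y => ∑ x : Fin 2, P₂ x y a b 1)
            (fun i _ => Finset.sum_nonneg fun j _ => hP₂pos j i a b 1)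
            (Finset.mem_univ a)
      _ = 1 := by rw [Finset.sum_comm]; exact hP₂norm a b 1
  -- exact values using no-signalling
  have e1 : ∀ b : Fin 2, ∑ a : Fin 2, ∑ x : Fin 2, P₁ x a a b 1 = 1 := by
    intro b
    have : ∀ a : Fin 2, ∑ x : Fin 2, P₁ x a a b 1 = ∑ x : Fin 2, P₁ x a 0 b 1 :=
      fun a => hNS₁ a a 0 b 1
    rw [Finset.sum_congr rfl fun a _ => this a, Finset.sum_comm]
    exact hP₁norm 0 b 1
  have e2 : ∀ a : Fin 2, ∑ b : Fin 2, ∑ y : Fin 2, P₂ b y a b 0 = 1 := by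
    intro a
    have : ∀ b : Fin 2, ∑ y : Fin 2, P₂ b y a b 0 = ∑ y : Fin 2, P₂ b y a 0 0 :=
      fun b => hNS₂ b a b 0 0 0
    rw [Finset.sum_congr rfl fun b _ => this b]
    exact hP₂norm a 0 0
  -- totals
  have S1 : (∑ a : Fin 2, ∑ b : Fin 2, ∑ y : Fin 2, P₁ b y a b 0)
          + (∑ a : Fin 2, ∑ b : Fin 2, ∑ x : Fin 2, P₁ x a a b 1) ≤ 6 := by
    have h1 := t1 0 0; have h2 := t1 0 1; have h3 := t1 1 0; have h4 := t1 1 1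
    have h5 := e1 0; have h6 := e1 1
    simp only [Fin.sum_univ_two] at *
    linarith
  have S2 : (∑ a : Fin 2, ∑ b : Fin 2, ∑ y : Fin 2, P₂ b y a b 0)
          + (∑ a : Fin 2, ∑ b : Fin 2, ∑ x : Fin 2, P₂ x a a b 1) ≤ 6 := by
    have h1 := t2 0 0; have h2 := t2 0 1; have h3 := t2 1 0; have h4 := t2 1 1
    have h5 := e2 0; have h6 := e2 1
    simp only [Fin.sum_univ_two] at *
    linarith
  have hsum : (∑ a : Fin 2, ∑ b : Fin 2, ∑ y : Fin 2, P b y a b 0)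
            + (∑ a : Fin 2, ∑ b : Fin 2, ∑ x : Fin 2, P x a a b 1)
      = q * ((∑ a : Fin 2, ∑ b : Fin 2, ∑ y : Fin 2, P₁ b y a b 0)
           + (∑ a : Fin 2, ∑ b : Fin 2, ∑ x : Fin 2, P₁ x a a b 1))
      + (1 - q) * ((∑ a : Fin 2, ∑ b : Fin 2, ∑ y : Fin 2, P₂ b y a b 0)
           + (∑ a : Fin 2, ∑ b : Fin 2, ∑ x : Fin 2, P₂ x a a b 1)) := by
    simp only [hmix, Fin.sum_univ_two]
    ring
  nlinarith [mul_le_mul_of_nonneg_left S1 hq0,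
    mul_le_mul_of_nonneg_left S2 (by linarith : (0:ℝ) ≤ 1 - q)]
end

section
/- Let σx = !![0, 1; 1, 0], σz = !![1, 0; 0, −1] ∈ Matrix (Fin 2) (Fin 2) ℂ, and let W ∈ Matrix ((Fin 2 × Fin 2) × (Fin 2 × Fin 2)) ((Fin 2 × Fin 2) × (Fin 2 × Fin 2)) ℂ be defined via Kronecker products with tensor factor order (A₁, A₂, B₁, B₂) as W := (1/4)·(1 ⊗ 1 ⊗ 1 ⊗ 1 + (1/√2)·(1 ⊗ σz ⊗ σz ⊗ 1 + σz ⊗ 1 ⊗ σx ⊗ σz)). Then W is positive semidefinite. -/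
/-!
The two correlation terms of `Wproc` are Hermitian involutions that anticommute, because `σz`
and `σx` anticommute on the tensor factor `B₁` they share. Hence their sum divided by `√2` is
again a Hermitian involution `S`, and `4 • Wproc = 1 + S = (1 + S)ᴴ(1 + S)/2` is positive semidefinite.
-/

open Matrix Kronecker ComplexOrder

noncomputable section

/-- Pauli matrix σx. -/
def σx : Matrix (Fin 2) (Fin 2) ℂ := !![0, 1; 1, 0]

/-- Pauli matrix σz. -/
def σz : Matrix (Fin 2) (Fin 2) ℂ := !![1, 0; 0, -1]

/-- The Oreshkov–Costa–Brukner process matrix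
`W = (1/4)·(𝟙 + (σz^{A₂}σz^{B₁} + σz^{A₁}σx^{B₁}σz^{B₂})/√2)`,
with Kronecker tensor factor order (A₁, A₂, B₁, B₂). -/
def Wproc : Matrix ((Fin 2 × Fin 2) × (Fin 2 × Fin 2)) ((Fin 2 × Fin 2) × (Fin 2 × Fin 2)) ℂ :=
  (1/4 : ℂ) •
    (((1 : Matrix (Fin 2) (Fin 2) ℂ) ⊗ₖ (1 : Matrix (Fin 2) (Fin 2) ℂ)) ⊗ₖ
        ((1 : Matrix (Fin 2) (Fin 2) ℂ) ⊗ₖ (1 : Matrix (Fin 2) (Fin 2) ℂ))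
      + (1 / (Real.sqrt 2 : ℂ)) •
        (((1 : Matrix (Fin 2) (Fin 2) ℂ) ⊗ₖ σz) ⊗ₖ (σz ⊗ₖ (1 : Matrix (Fin 2) (Fin 2) ℂ))
          + (σz ⊗ₖ (1 : Matrix (Fin 2) (Fin 2) ℂ)) ⊗ₖ (σx ⊗ₖ σz)))

theorem smul_add_mul_self_eq_one_of_anticommute {R α : Type*} [CommSemiring R] [Ring α]
    [Algebra R α] {a b : α} {c : R} (ha : a * a = 1) (hb : b * b = 1)
    (hab : a * b = -(b * a)) (hc : c * c * 2 = 1) :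
    (c • (a + b)) * (c • (a + b)) = 1 := by
  have hsq : (a + b) * (a + b) = 2 := by
    rw [add_mul, mul_add, mul_add, ha, hb, hab, ← one_add_one_eq_two]
    abel
  rw [smul_mul_smul_comm, hsq, Algebra.smul_def, ← map_ofNat (algebraMap R α) 2, ← map_mul, hc,
    map_one]

namespace Matrix

theorem IsHermitian.kronecker {m n R : Type*} [CommRing R] [StarRing R] {A : Matrix m m R}
    {B : Matrix n n R} (hA : A.IsHermitian) (hB : B.IsHermitian) : (A ⊗ₖ B).IsHermitian :=
  (conjTranspose_kronecker A B).trans (by rw [hA.eq, hB.eq])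

theorem posSemidef_one_add_of_mul_self_eq_one {n 𝕜 : Type*} [Fintype n] [DecidableEq n]
    [RCLike 𝕜] {S : Matrix n n 𝕜} (hS : S.IsHermitian)
    (hS2 : S * S = 1) : (1 + S).PosSemidef := by
  have h : 1 + S = (2⁻¹ : 𝕜) • ((1 + S)ᴴ * (1 + S)) := by
    rw [conjTranspose_add, conjTranspose_one, hS.eq, add_mul, mul_add, mul_add, hS2, one_mul,
      one_mul, mul_one]
    module
  rw [h]
  exact (posSemidef_conjTranspose_mul_self _).smul (inv_nonneg.2 zero_le_two)

end Matrix

theorem σx_isHermitian : σx.IsHermitian := by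
  ext i j; fin_cases i <;> fin_cases j <;> simp [σx, conjTranspose_apply]

theorem σz_isHermitian : σz.IsHermitian := by
  ext i j; fin_cases i <;> fin_cases j <;> simp [σz, conjTranspose_apply]

theorem σx_mul_self : σx * σx = 1 := by
  ext i j; fin_cases i <;> fin_cases j <;> simp [σx, mul_apply, one_apply]

theorem σz_mul_self : σz * σz = 1 := by
  ext i j; fin_cases i <;> fin_cases j <;> simp [σz, mul_apply, one_apply]

theorem σz_mul_σx : σz * σx = -(σx * σz) := by
  ext i j; fin_cases i <;> fin_cases j <;> simp [σx, σz, mul_apply]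

/-- The `A → B` signalling term `σz^{A₂} σz^{B₁}` of `Wproc`. -/
def signalAB : Matrix ((Fin 2 × Fin 2) × (Fin 2 × Fin 2)) ((Fin 2 × Fin 2) × (Fin 2 × Fin 2)) ℂ :=
  ((1 : Matrix (Fin 2) (Fin 2) ℂ) ⊗ₖ σz) ⊗ₖ (σz ⊗ₖ (1 : Matrix (Fin 2) (Fin 2) ℂ))

/-- The `B → A` signalling term `σz^{A₁} σx^{B₁} σz^{B₂}` of `Wproc`. -/
def signalBA : Matrix ((Fin 2 × Fin 2) × (Fin 2 × Fin 2)) ((Fin 2 × Fin 2) × (Fin 2 × Fin 2)) ℂ :=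
  (σz ⊗ₖ (1 : Matrix (Fin 2) (Fin 2) ℂ)) ⊗ₖ (σx ⊗ₖ σz)

theorem signalAB_isHermitian : signalAB.IsHermitian :=
  (isHermitian_one.kronecker σz_isHermitian).kronecker (σz_isHermitian.kronecker isHermitian_one)

theorem signalBA_isHermitian : signalBA.IsHermitian :=
  (σz_isHermitian.kronecker isHermitian_one).kronecker (σx_isHermitian.kronecker σz_isHermitian)

theorem signalAB_mul_self : signalAB * signalAB = 1 := by
  simp only [signalAB, ← mul_kronecker_mul, mul_one, σz_mul_self, one_kronecker_one]

theorem signalBA_mul_self : signalBA * signalBA = 1 := by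
  simp only [signalBA, ← mul_kronecker_mul, mul_one, σz_mul_self, σx_mul_self, one_kronecker_one]

theorem signalAB_mul_signalBA : signalAB * signalBA = -(signalBA * signalAB) := by
  simp only [signalAB, signalBA, ← mul_kronecker_mul, mul_one, one_mul, σz_mul_σx]
  rw [← neg_one_smul ℂ (σx * σz), smul_kronecker, kronecker_smul, neg_one_smul]

/-- The Oreshkov–Costa–Brukner process matrix is positive semidefinite. -/
theorem Wproc_posSemidef : Wproc.PosSemidef := by
  have hc : (1 / (Real.sqrt 2 : ℂ)) * (1 / (Real.sqrt 2 : ℂ)) * 2 = 1 := by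
    rw [div_mul_div_comm, one_mul, ← Complex.ofReal_mul, Real.mul_self_sqrt zero_le_two]
    norm_num
  have hW : Wproc = (1 / 4 : ℂ) • (1 + (1 / (Real.sqrt 2 : ℂ)) • (signalAB + signalBA)) := by
    rw [Wproc, signalAB, signalBA, one_kronecker_one, one_kronecker_one]
  rw [hW]
  refine PosSemidef.smul (posSemidef_one_add_of_mul_self_eq_one ?_ ?_) (by positivity)
  · exact (signalAB_isHermitian.add signalBA_isHermitian).smul (by simp [isSelfAdjoint_iff])
  · exact smul_add_mul_self_eq_one_of_anticommute signalAB_mul_self signalBA_mul_self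
      signalAB_mul_signalBA hc

end
end

section
/- Let σx = !![0, 1; 1, 0], σz = !![1, 0; 0, −1] ∈ Matrix (Fin 2) (Fin 2) ℂ and let W := (1/4)·(1 ⊗ 1 ⊗ 1 ⊗ 1 + (1/√2)·(1 ⊗ σz ⊗ σz ⊗ 1 + σz ⊗ 1 ⊗ σx ⊗ σz)) in tensor factor order (A₁, A₂, B₁, B₂), where ⊗ is the Kronecker product. Then for every positive semidefinite M ∈ Matrix (Fin 2 × Fin 2) (Fin 2 × Fin 2) ℂ whose partial trace over its second factor equals the 2×2 identity (Tr₂ M = 1₂), and every positive semidefinite N ∈ Matrix (Fin 2 × Fin 2) (Fin 2 × Fin 2) ℂ with Tr₂ N = 1₂, one has trace(W · (M ⊗ N)) = 1. -/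
open Matrix Kronecker ComplexOrder

noncomputable section

/-- Normalization of the Oreshkov–Costa–Brukner process matrix: for all Choi
matrices `M`, `N` of quantum channels (positive semidefinite with partial trace
over the output factor equal to the identity), `trace(W (M ⊗ N)) = 1`. -/
theorem Wproc_normalized
    (M N : Matrix (Fin 2 × Fin 2) (Fin 2 × Fin 2) ℂ)
    (hM : M.PosSemidef) (hN : N.PosSemidef)
    (hMtr : Matrix.of (fun p q : Fin 2 => ∑ k : Fin 2, M (p, k) (q, k))
      = (1 : Matrix (Fin 2) (Fin 2) ℂ))
    (hNtr : Matrix.of (fun p q : Fin 2 => ∑ k : Fin 2, N (p, k) (q, k))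
      = (1 : Matrix (Fin 2) (Fin 2) ℂ)) :
    (Wproc * (M ⊗ₖ N)).trace = 1 := by
  have hM' : ∀ p q : Fin 2, M (p, 0) (q, 0) + M (p, 1) (q, 1)
      = if p = q then 1 else 0 := by
    intro p q
    have := (Matrix.ext_iff.mpr hMtr) p q
    simpa [Matrix.one_apply, Fin.sum_univ_two] using this
  have hN' : ∀ p q : Fin 2, N (p, 0) (q, 0) + N (p, 1) (q, 1)
      = if p = q then 1 else 0 := by
    intro p q
    have := (Matrix.ext_iff.mpr hNtr) p q
    simpa [Matrix.one_apply, Fin.sum_univ_two] using this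
  have hM00 : M (0, 0) (0, 0) + M (0, 1) (0, 1) = 1 := by simpa using hM' 0 0
  have hM11 : M (1, 0) (1, 0) + M (1, 1) (1, 1) = 1 := by simpa using hM' 1 1
  have hN00 : N (0, 0) (0, 0) + N (0, 1) (0, 1) = 1 := by simpa using hN' 0 0
  have hN11 : N (1, 0) (1, 0) + N (1, 1) (1, 1) = 1 := by simpa using hN' 1 1
  have trM : M.trace = 2 := by
    simp only [Matrix.trace, Matrix.diag, Fintype.sum_prod_type, Fin.sum_univ_two]
    linear_combination hM00 + hM11
  have trN : N.trace = 2 := by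
    simp only [Matrix.trace, Matrix.diag, Fintype.sum_prod_type, Fin.sum_univ_two]
    linear_combination hN00 + hN11
  have hzM : ((σz ⊗ₖ (1 : Matrix (Fin 2) (Fin 2) ℂ)) * M).trace = 0 := by
    simp only [Matrix.trace, Matrix.diag, Matrix.mul_apply, Fintype.sum_prod_type,
      Fin.sum_univ_two, Matrix.kroneckerMap_apply, Matrix.one_apply, σz,
      Matrix.cons_val', Matrix.cons_val_zero, Matrix.cons_val_one, Matrix.head_cons,
      Matrix.empty_val', Matrix.cons_val_fin_one, Matrix.head_fin_const]
    norm_num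
    linear_combination hM00 - hM11
  have hzN : ((σz ⊗ₖ (1 : Matrix (Fin 2) (Fin 2) ℂ)) * N).trace = 0 := by
    simp only [Matrix.trace, Matrix.diag, Matrix.mul_apply, Fintype.sum_prod_type,
      Fin.sum_univ_two, Matrix.kroneckerMap_apply, Matrix.one_apply, σz,
      Matrix.cons_val', Matrix.cons_val_zero, Matrix.cons_val_one, Matrix.head_cons,
      Matrix.empty_val', Matrix.cons_val_fin_one, Matrix.head_fin_const]
    norm_num
    linear_combination hN00 - hN11
  rw [Wproc, smul_mul_assoc, trace_smul, add_mul, smul_mul_assoc, add_mul,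
    ← Matrix.mul_kronecker_mul, ← Matrix.mul_kronecker_mul, ← Matrix.mul_kronecker_mul,
    trace_add, trace_smul, trace_add, trace_kronecker, trace_kronecker, trace_kronecker,
    Matrix.one_kronecker_one, one_mul, one_mul, trM, trN, hzM, hzN]
  simp only [smul_eq_mul]
  ring
end
end

section
/- Let σx = !![0, 1; 1, 0], σz = !![1, 0; 0, −1] ∈ Matrix (Fin 2) (Fin 2) ℂ, and let W := (1/4)·(1 ⊗ 1 ⊗ 1 ⊗ 1 + (1/√2)·(1 ⊗ σz ⊗ σz ⊗ 1 + σz ⊗ 1 ⊗ σx ⊗ σz)) (Kronecker products, factor order (A₁, A₂, B₁, B₂)). For bits x, a, y, b ∈ {0,1} define M(x,a) := (1/4)·(1 + (−1)^x σz) ⊗ (1 + (−1)^a σz), N₁(y) := (1/2)·(1 + (−1)^y σz) ⊗ ρ for an arbitrary positive semidefinite ρ ∈ Matrix (Fin 2) (Fin 2) ℂ with trace 1, and N₂(y,b) := (1/4)·(1 + (−1)^y σx) ⊗ (1 + (−1)^{b+y} σz). Then for all bits a, b, x, y: ∑_{x'∈{0,1}} trace(W · (M(x',a) ⊗ N₁(y)))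 = (1/2)·(1 + (−1)^{y+a}/√2) and ∑_{y'∈{0,1}} trace(W · (M(x,a) ⊗ N₂(y',b))) = (1/2)·(1 + (−1)^{x+b}/√2). In particular the success probability P_succ = (1/2)·[P(x=b | b'=0) + P(y=a | b'=1)] obtained from these strategies equals (2+√2)/4, which is strictly greater than 3/4. -/
/-!
Every term of `Wproc` is a Kronecker product of single-qubit operators, so each joint
probability factorizes into single-qubit traces `tr (σ * (1 ± σ'))`, which vanish unless
`σ = σ'`. For `N₁` only the `1 ⊗ σz ⊗ σz ⊗ 1` term survives, correlating Bob's measured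
input with Alice's repreparation of `a`; for `N₂` only `σz ⊗ 1 ⊗ σx ⊗ σz` survives, which
correlates Alice's measured input with Bob's output `b`. Either way the guess is right with
probability `(1 + 1/√2)/2 = (2 + √2)/4 > 3/4`.
-/

open Matrix Kronecker ComplexOrder

noncomputable section

/-- Alice's Choi matrix `M(x,a) = (1/4)(𝟙 + (−1)ˣ σz) ⊗ (𝟙 + (−1)ᵃ σz)`. -/
def Mop (x a : Fin 2) : Matrix (Fin 2 × Fin 2) (Fin 2 × Fin 2) ℂ :=
  (1/4 : ℂ) • ((1 + ((-1 : ℂ) ^ (x : ℕ)) • σz) ⊗ₖ (1 + ((-1 : ℂ) ^ (a : ℕ)) • σz))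

/-- Bob's Choi matrix for `b' = 1`: `N₁(y) = (1/2)(𝟙 + (−1)ʸ σz) ⊗ ρ`. -/
def N₁op (ρ : Matrix (Fin 2) (Fin 2) ℂ) (y : Fin 2) : Matrix (Fin 2 × Fin 2) (Fin 2 × Fin 2) ℂ :=
  (1/2 : ℂ) • ((1 + ((-1 : ℂ) ^ (y : ℕ)) • σz) ⊗ₖ ρ)

/-- Bob's Choi matrix for `b' = 0`:
`N₂(y,b) = (1/4)(𝟙 + (−1)ʸ σx) ⊗ (𝟙 + (−1)^{b+y} σz)`. -/
def N₂op (y b : Fin 2) : Matrix (Fin 2 × Fin 2) (Fin 2 × Fin 2) ℂ :=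
  (1/4 : ℂ) • ((1 + ((-1 : ℂ) ^ (y : ℕ)) • σx) ⊗ₖ
    (1 + ((-1 : ℂ) ^ ((b : ℕ) + (y : ℕ))) • σz))

namespace Matrix

variable {R l m n p : Type*} [CommSemiring R] [Fintype l] [Fintype m] [Fintype n] [Fintype p]

theorem trace_kronecker_kronecker_mul (A m₁ : Matrix l l R) (B m₂ : Matrix m m R)
    (C n₁ : Matrix n n R) (D n₂ : Matrix p p R) :
    (((A ⊗ₖ B) ⊗ₖ (C ⊗ₖ D)) * ((m₁ ⊗ₖ m₂) ⊗ₖ (n₁ ⊗ₖ n₂))).trace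
      = (A * m₁).trace * (B * m₂).trace * ((C * n₁).trace * (D * n₂).trace) := by
  simp only [← mul_kronecker_mul, trace_kronecker]

theorem trace_one_add_smul [DecidableEq n] (Q : Matrix n n R) (c : R) :
    (1 + c • Q).trace = Fintype.card n + c * Q.trace := by
  simp only [trace_add, trace_one, trace_smul, smul_eq_mul]

theorem trace_mul_one_add_smul [DecidableEq n] (P Q : Matrix n n R) (c : R) :
    (P * (1 + c • Q)).trace = P.trace + c * (P * Q).trace := by
  simp only [Matrix.mul_add, Matrix.mul_one, Matrix.mul_smul, trace_add, trace_smul, smul_eq_mul]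

end Matrix

theorem trace_σx : σx.trace = 0 := by simp [σx, Matrix.trace_fin_two]
theorem trace_σz : σz.trace = 0 := by simp [σz, Matrix.trace_fin_two]
theorem trace_σx_mul_σx : (σx * σx).trace = 2 := by
  norm_num [σx, Matrix.mul_fin_two, Matrix.trace_fin_two]
theorem trace_σz_mul_σz : (σz * σz).trace = 2 := by
  norm_num [σz, Matrix.mul_fin_two, Matrix.trace_fin_two]
theorem trace_σx_mul_σz : (σx * σz).trace = 0 := by
  norm_num [σx, σz, Matrix.mul_fin_two, Matrix.trace_fin_two]
theorem trace_σz_mul_σx : (σz * σx).trace = 0 := by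
  norm_num [σx, σz, Matrix.mul_fin_two, Matrix.trace_fin_two]

theorem trace_Wproc_mul_kronecker (m₁ m₂ n₁ n₂ : Matrix (Fin 2) (Fin 2) ℂ) :
    (Wproc * ((m₁ ⊗ₖ m₂) ⊗ₖ (n₁ ⊗ₖ n₂))).trace
      = (1/4) * (m₁.trace * m₂.trace * (n₁.trace * n₂.trace)
        + (1 / (Real.sqrt 2 : ℂ)) *
          (m₁.trace * (σz * m₂).trace * ((σz * n₁).trace * n₂.trace)
            + (σz * m₁).trace * m₂.trace * ((σx * n₁).trace * (σz * n₂).trace))) := by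
  simp only [Wproc, Matrix.smul_mul, Matrix.add_mul, Matrix.trace_smul, Matrix.trace_add,
    Matrix.trace_kronecker_kronecker_mul, Matrix.one_mul, smul_eq_mul]

theorem trace_Wproc_mul_Mop_kronecker_N₁op (ρ : Matrix (Fin 2) (Fin 2) ℂ) (hρtr : ρ.trace = 1)
    (x a y : Fin 2) :
    (Wproc * (Mop x a ⊗ₖ N₁op ρ y)).trace
      = (1/4) * (1 + (-1 : ℂ) ^ ((y : ℕ) + (a : ℕ)) / (Real.sqrt 2 : ℂ)) := by
  rw [Mop, N₁op, Matrix.smul_kronecker, Matrix.kronecker_smul, smul_smul, Matrix.mul_smul,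
    Matrix.trace_smul, trace_Wproc_mul_kronecker]
  simp only [Matrix.trace_one_add_smul, Matrix.trace_mul_one_add_smul, trace_σx, trace_σz,
    trace_σz_mul_σz, trace_σx_mul_σz, hρtr, Fintype.card_fin, smul_eq_mul]
  rw [pow_add]
  ring

theorem trace_Wproc_mul_Mop_kronecker_N₂op (x a y b : Fin 2) :
    (Wproc * (Mop x a ⊗ₖ N₂op y b)).trace
      = (1/4) * (1 + (-1 : ℂ) ^ ((x : ℕ) + (b : ℕ)) / (Real.sqrt 2 : ℂ)) := by
  rw [Mop, N₂op, Matrix.smul_kronecker, Matrix.kronecker_smul, smul_smul, Matrix.mul_smul,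
    Matrix.trace_smul, trace_Wproc_mul_kronecker]
  simp only [Matrix.trace_one_add_smul, Matrix.trace_mul_one_add_smul, trace_σx, trace_σz,
    trace_σz_mul_σz, trace_σx_mul_σx, trace_σz_mul_σx, Fintype.card_fin,
    smul_eq_mul]
  have hy : (-1 : ℂ) ^ (y : ℕ) * (-1) ^ (y : ℕ) = 1 := by
    rw [← pow_add, (Even.add_self _).neg_one_pow]
  rw [pow_add, pow_add]
  linear_combination (1 / 4 : ℂ) / Real.sqrt 2 * (-1) ^ (x : ℕ) * (-1) ^ (b : ℕ) * hy

theorem Wproc_violates_causal_inequality_general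
    (ρ : Matrix (Fin 2) (Fin 2) ℂ) (hρtr : ρ.trace = 1)
    (a b x y : Fin 2) :
    (∑ x' : Fin 2, (Wproc * (Mop x' a ⊗ₖ N₁op ρ y)).trace
        = (1/2 : ℂ) * (1 + ((-1 : ℂ) ^ ((y : ℕ) + (a : ℕ))) / (Real.sqrt 2 : ℂ))) ∧
    (∑ y' : Fin 2, (Wproc * (Mop x a ⊗ₖ N₂op y' b)).trace
        = (1/2 : ℂ) * (1 + ((-1 : ℂ) ^ ((x : ℕ) + (b : ℕ))) / (Real.sqrt 2 : ℂ))) ∧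
    ((1/2 : ℂ) *
        ((1/4 : ℂ) * (∑ a' : Fin 2, ∑ b' : Fin 2, ∑ y' : Fin 2,
            (Wproc * (Mop b' a' ⊗ₖ N₂op y' b')).trace)
          + (1/4 : ℂ) * (∑ a' : Fin 2, ∑ b' : Fin 2, ∑ x' : Fin 2,
            (Wproc * (Mop x' a' ⊗ₖ N₁op ρ a')).trace))
        = (((2 + Real.sqrt 2) / 4 : ℝ) : ℂ)) ∧
    (3/4 : ℝ) < (2 + Real.sqrt 2) / 4 := by
  have hwin : ∀ n : ℕ, (-1 : ℂ) ^ (n + n) = 1 := fun n => (Even.add_self n).neg_one_pow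
  have hsqrt : (Real.sqrt 2 : ℂ) ^ 2 = 2 := by
    norm_cast; exact Real.sq_sqrt zero_le_two
  have hsqrt_ne : (Real.sqrt 2 : ℂ) ≠ 0 := by
    exact_mod_cast Real.sqrt_ne_zero'.mpr zero_lt_two
  refine ⟨?_, ?_, ?_, by linarith [Real.one_lt_sqrt_two]⟩
  · simp only [Fin.sum_univ_two, trace_Wproc_mul_Mop_kronecker_N₁op ρ hρtr]; ring
  · simp only [Fin.sum_univ_two, trace_Wproc_mul_Mop_kronecker_N₂op]; ring
  · simp only [Fin.sum_univ_two, trace_Wproc_mul_Mop_kronecker_N₂op,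
      trace_Wproc_mul_Mop_kronecker_N₁op ρ hρtr, hwin]
    push_cast
    field_simp
    linear_combination (-8 : ℂ) * hsqrt

/-- The Oreshkov–Costa–Brukner process matrix yields the marginal probabilities
`P(y|a,b,b'=1) = (1/2)(1 + (−1)^{y+a}/√2)` and
`P(x|a,b,b'=0) = (1/2)(1 + (−1)^{x+b}/√2)` for the given strategies; the
resulting success probability equals `(2+√2)/4 > 3/4`, violating the causal
inequality. -/
theorem Wproc_violates_causal_inequality
    (ρ : Matrix (Fin 2) (Fin 2) ℂ) (hρ : ρ.PosSemidef) (hρtr : ρ.trace = 1)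
    (a b x y : Fin 2) :
    (∑ x' : Fin 2, (Wproc * (Mop x' a ⊗ₖ N₁op ρ y)).trace
        = (1/2 : ℂ) * (1 + ((-1 : ℂ) ^ ((y : ℕ) + (a : ℕ))) / (Real.sqrt 2 : ℂ))) ∧
    (∑ y' : Fin 2, (Wproc * (Mop x a ⊗ₖ N₂op y' b)).trace
        = (1/2 : ℂ) * (1 + ((-1 : ℂ) ^ ((x : ℕ) + (b : ℕ))) / (Real.sqrt 2 : ℂ))) ∧
    ((1/2 : ℂ) *
        ((1/4 : ℂ) * (∑ a' : Fin 2, ∑ b' : Fin 2, ∑ y' : Fin 2,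
            (Wproc * (Mop b' a' ⊗ₖ N₂op y' b')).trace)
          + (1/4 : ℂ) * (∑ a' : Fin 2, ∑ b' : Fin 2, ∑ x' : Fin 2,
            (Wproc * (Mop x' a' ⊗ₖ N₁op ρ a')).trace))
        = (((2 + Real.sqrt 2) / 4 : ℝ) : ℂ)) ∧
    (3/4 : ℝ) < (2 + Real.sqrt 2) / 4 :=
  Wproc_violates_causal_inequality_general ρ hρtr a b x y

end
end

section
/- Let A, B ∈ Matrix (Fin 2) (Fin 2) ℂ and ψ : Fin 2 → ℂ. Define w : (Fin 2 × Fin 2 × Fin 2 × Fin 2 × Fin 2 × Fin 2) → ℂ by w(i₁,i₂,i₃,i₄,i₅,i₆) := (1/√2)·(ψ(i₁)·δ_{i₂ i₃}·δ_{i₄ i₅}·δ_{i₆ 0} + ψ(i₃)·δ_{i₄ i₁}·δ_{i₂ i₅}·δ_{i₆ 1}), where the six indices correspond to the spaces (A_I, A_O, B_I, B_O, C_t, C_c). Define r : Fin 2 × Fin 2 → ℂ by contracting the Choi vectors of A and B against w: r(i₅,i₆) := ∑_{i₁,i₂,i₃,i₄} (Aᵀ)_{i₁ i₂} · (Bᵀ)_{i₃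 i₄} · w(i₁,i₂,i₃,i₄,i₅,i₆). Then r(i₅, 0) = (1/√2)·(B·A·ψ)(i₅) and r(i₅, 1) = (1/√2)·(A·B·ψ)(i₅); equivalently, r = (1/√2)·((B A ψ) ⊗ e₀ + (A B ψ) ⊗ e₁). -/
open Matrix

/-- Contracting the process vector `w` of the quantum switch with the Choi
vectors of the local operations `A` and `B` yields
`r = (1/√2)((B A ψ) ⊗ e₀ + (A B ψ) ⊗ e₁)`: the characteristic superposition of
the two orders of application of `A` and `B` on the target. -/
theorem quantum_switch_contraction
    (A B : Matrix (Fin 2) (Fin 2) ℂ) (ψ : Fin 2 → ℂ)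
    (w : Fin 2 × Fin 2 × Fin 2 × Fin 2 × Fin 2 × Fin 2 → ℂ)
    (hw : ∀ i₁ i₂ i₃ i₄ i₅ i₆ : Fin 2, w (i₁, i₂, i₃, i₄, i₅, i₆)
      = (1 / (Real.sqrt 2 : ℂ)) *
        (ψ i₁ * (if i₂ = i₃ then 1 else 0) * (if i₄ = i₅ then 1 else 0)
            * (if i₆ = 0 then 1 else 0)
          + ψ i₃ * (if i₄ = i₁ then 1 else 0) * (if i₂ = i₅ then 1 else 0)
            * (if i₆ = 1 then 1 else 0)))
    (r : Fin 2 × Fin 2 → ℂ)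
    (hr : ∀ i₅ i₆ : Fin 2, r (i₅, i₆)
      = ∑ i₁ : Fin 2, ∑ i₂ : Fin 2, ∑ i₃ : Fin 2, ∑ i₄ : Fin 2,
          Aᵀ i₁ i₂ * Bᵀ i₃ i₄ * w (i₁, i₂, i₃, i₄, i₅, i₆)) :
    ∀ i₅ : Fin 2,
      r (i₅, 0) = (1 / (Real.sqrt 2 : ℂ)) * (B * A).mulVec ψ i₅ ∧
      r (i₅, 1) = (1 / (Real.sqrt 2 : ℂ)) * (A * B).mulVec ψ i₅ := by
  intro i₅
  constructor <;>
  · rw [hr]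
    simp only [hw, Matrix.mul_apply, Matrix.mulVec, Matrix.transpose_apply,
      dotProduct, Fin.sum_univ_two]
    fin_cases i₅ <;> simp <;> ring
end

section
/- Let α, β, γ, δ, t₁, t₂ be positive real numbers such that √(α·δ/(β·γ)) < 1, and let τ_a, τ_b be real numbers. Suppose τ_b = √δ · (τ_a/√γ + t₁) and √α · (τ_b/√β + t₂) ≤ τ_a. Then τ_a ≥ √α · (√(δ/β)·t₁ + t₂) / (1 − √(α·δ/(β·γ))). -/
/-- Lower bound on the proper time `τ_a` in the alternative gravitational quantum
switch configuration: if `τ_b = √δ·(τ_a/√γ + t₁)` (a light signal from event A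
arrives exactly at event B in one configuration) and
`√α·(τ_b/√β + t₂) ≤ τ_a` (a light signal from event B arrives no later than event
A in the other configuration), then
`τ_a ≥ √α·(√(δ/β)·t₁ + t₂)/(1 − √(αδ/(βγ)))`. -/
theorem tau_lower_bound
    (α β γ δ t₁ t₂ : ℝ)
    (hα : 0 < α) (hβ : 0 < β) (hγ : 0 < γ) (hδ : 0 < δ)
    (ht₁ : 0 < t₁) (ht₂ : 0 < t₂)
    (hlt : Real.sqrt (α * δ / (β * γ)) < 1)
    (τa τb : ℝ)
    (hτb : τb = Real.sqrt δ * (τa / Real.sqrt γ + t₁))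
    (hineq : Real.sqrt α * (τb / Real.sqrt β + t₂) ≤ τa) :
    τa ≥ Real.sqrt α * (Real.sqrt (δ / β) * t₁ + t₂)
          / (1 - Real.sqrt (α * δ / (β * γ))) := by
  have ha := Real.sqrt_pos.mpr hα
  have hb := Real.sqrt_pos.mpr hβ
  have hg := Real.sqrt_pos.mpr hγ
  have hd := Real.sqrt_pos.mpr hδ
  have h1 : Real.sqrt (α * δ / (β * γ))
      = Real.sqrt α * Real.sqrt δ / (Real.sqrt β * Real.sqrt γ) := by
    rw [Real.sqrt_div (by positivity) , Real.sqrt_mul hα.le, Real.sqrt_mul hβ.le]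
  have h2 : Real.sqrt (δ / β) = Real.sqrt δ / Real.sqrt β := by
    rw [Real.sqrt_div hδ.le]
  rw [h1] at hlt ⊢
  rw [h2]
  rw [ge_iff_le, div_le_iff₀ (by linarith : 0 < 1 - Real.sqrt α * Real.sqrt δ / (Real.sqrt β * Real.sqrt γ))]
  subst hτb
  have h3 : Real.sqrt α * (Real.sqrt δ * (τa / Real.sqrt γ + t₁) / Real.sqrt β + t₂)
      = Real.sqrt α * Real.sqrt δ / (Real.sqrt β * Real.sqrt γ) * τa
        + Real.sqrt α * (Real.sqrt δ / Real.sqrt β * t₁ + t₂) := by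
    field_simp; ring
  rw [h3] at hineq
  nlinarith [hineq]
end
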